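/- Let Q : ℝ¹⁰ → ℝ¹⁰ and g₁, g₄ ∈ ℝ¹⁰ be as in the context. Then for every natural number b, the b-fold iterate of Q applied to g₄ satisfies Q^{∘b}(g₄) = b·g₁ + g₄. -/
import Mathlib


/-- The `max`-tropicalisation of the pullback action of `σ₁⁻¹` of `Gr(3,9)` on the
ŷ-variables of the initial seed of `ℂ[Gr(3,9)]`, realizing the action of `σ₁` on
g-vectors taken with respect to the initial cluster
`(P₁₂₄, P₁₃₄, P₁₂₅, P₁₄₅, P₁₂₆, P₁₅₆, P₁₂₇, P₁₆₇, P₁₂₈, P₁₇₈)`. -/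
noncomputable def Q : (Fin 10 → ℝ) → (Fin 10 → ℝ) := fun v =>
  ![v 3 + max 0 (max (v 5) (max (v 5 + v 7) (v 5 + v 7 + v 9)))
      - max 0 (max (v 1) (max (v 1 + v 3) (max (v 1 + v 3 + v 5)
          (max (v 1 + v 3 + v 5 + v 7) (v 1 + v 3 + v 5 + v 7 + v 9))))),
    max 0 (v 1) - v 1 - v 3 - max 0 (max (v 5) (max (v 5 + v 7) (v 5 + v 7 + v 9))),
    v 0 + max 0 (v 1)
      + max 0 (max (v 5) (max (v 2 + v 5) (max (v 5 + v 7) (max (v 2 + v 5 + v 7)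
          (max (v 5 + v 7 + v 9) (v 2 + v 5 + v 7 + v 9))))))
      - max 0 (max (v 5) (max (v 5 + v 7) (v 5 + v 7 + v 9))),
    v 2 + max 0 (max (v 1) (max (v 1 + v 3) (max (v 1 + v 3 + v 5)
          (max (v 1 + v 3 + v 5 + v 7) (v 1 + v 3 + v 5 + v 7 + v 9)))))
      - max 0 (v 1)
      - max 0 (max (v 5) (max (v 2 + v 5) (max (v 5 + v 7) (max (v 2 + v 5 + v 7)
          (max (v 5 + v 7 + v 9) (v 2 + v 5 + v 7 + v 9)))))),
    v 2 + v 4 + v 5 + v 7 + max 0 (max (v 7) (v 7 + v 9)) - max 0 (v 7)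
      - max 0 (max (v 5) (max (v 2 + v 5) (max (v 5 + v 7) (max (v 2 + v 5 + v 7)
          (max (v 5 + v 7 + v 9) (v 2 + v 5 + v 7 + v 9)))))),
    max 0 (max (v 5) (max (v 5 + v 7) (v 5 + v 7 + v 9))) - v 2 - v 5
      - max 0 (max (v 7) (v 7 + v 9)),
    v 9 - max 0 (max (v 7) (v 7 + v 9)),
    max 0 (v 7)
      + max 0 (max (v 5) (max (v 2 + v 5) (max (v 5 + v 7) (max (v 2 + v 5 + v 7)
          (max (v 5 + v 7 + v 9) (v 2 + v 5 + v 7 + v 9))))))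
      - v 7 - v 9,
    v 6 + max 0 (v 7),
    v 8 + max 0 (max (v 7) (v 7 + v 9)) - max 0 (v 7)]

/-- The truncated g-vector of the stable fixed tableau `[[1,3,4],[2,6,7],[5,8,9]]` of `σ₁`. -/
noncomputable def g1 : Fin 10 → ℝ := ![0, 0, 1, -1, 0, -1, -1, 1, 0, 1]

/-- The g-vector `g₄ = σ₁(g₃)`. -/
noncomputable def g4 : Fin 10 → ℝ := ![1, -1, 0, -2, -2, 1, -1, 2, 1, 1]

lemma mlast7 {a b c d e f : ℝ} (h0 : 0 ≤ f) (h1 : a ≤ f) (h2 : b ≤ f) (h3 : c ≤ f)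
    (h4 : d ≤ f) (h5 : e ≤ f) :
    max 0 (max a (max b (max c (max d (max e f))))) = f := by
  rw [max_eq_right h5, max_eq_right h4, max_eq_right h3, max_eq_right h2,
    max_eq_right h1, max_eq_right h0]

lemma mlast6 {a b c d e : ℝ} (h0 : 0 ≤ e) (h1 : a ≤ e) (h2 : b ≤ e) (h3 : c ≤ e)
    (h4 : d ≤ e) :
    max 0 (max a (max b (max c (max d e)))) = e := by
  rw [max_eq_right h4, max_eq_right h3, max_eq_right h2, max_eq_right h1, max_eq_right h0]

lemma mlast4 {a b c : ℝ} (h0 : 0 ≤ c) (h1 : a ≤ c) (h2 : b ≤ c) :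
    max 0 (max a (max b c)) = c := by
  rw [max_eq_right h2, max_eq_right h1, max_eq_right h0]

lemma mlast3 {a b : ℝ} (h0 : 0 ≤ b) (h1 : a ≤ b) : max 0 (max a b) = b := by
  rw [max_eq_right h1, max_eq_right h0]

lemma mpos {a : ℝ} (h : 0 ≤ a) : max 0 a = a := max_eq_right h

lemma mneg {a : ℝ} (h : a ≤ 0) : max 0 a = 0 := max_eq_left h

lemma key (c : ℝ) (hc : 0 ≤ c) : Q (c • g1 + g4) = (c + 1) • g1 + g4 := by
  have hD : (max 0 (max (c * 0 + -1) (max ((c * 0 + -1) + (c * -1 + -2)) (max ((c * 0 + -1) + (c * -1 + -2) + (c * -1 + 1)) (max ((c * 0 + -1) + (c * -1 + -2) + (c * -1 + 1) + (c * 1 + 2)) (((c * 0 + -1) + (c * -1 + -2) + (c * -1 + 1) + (c * 1 + 2) + (c * 1 + 1)))))))) = ((c * 0 + -1) + (c * -1 + -2) + (c * -1 + 1) + (c * 1 + 2) + (c * 1 + 1)) := mlast6 (by linarith) (by linarith) (by linarith) (by linarith) (by linarith)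
  have hE : (max 0 (max (c * -1 + 1) (max ((c * -1 + 1) + (c * 1 + 2)) (((c * -1 + 1) + (c * 1 + 2) + (c * 1 + 1)))))) = ((c * -1 + 1) + (c * 1 + 2) + (c * 1 + 1)) := mlast4 (by linarith) (by linarith) (by linarith)
  have hF : (max 0 (max (c * -1 + 1) (max ((c * 1 + 0) + (c * -1 + 1)) (max ((c * -1 + 1) + (c * 1 + 2)) (max ((c * 1 + 0) + (c * -1 + 1) + (c * 1 + 2)) (max ((c * -1 + 1) + (c * 1 + 2) + (c * 1 + 1)) (((c * 1 + 0) + (c * -1 + 1) + (c * 1 + 2) + (c * 1 + 1))))))))) = ((c * 1 + 0) + (c * -1 + 1) + (c * 1 + 2) + (c * 1 + 1)) := mlast7 (by linarith) (by linarith) (by linarith) (by linarith) (by linarith) (by linarith)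
  have hG : (max 0 (max (c * 1 + 2) (((c * 1 + 2) + (c * 1 + 1))))) = ((c * 1 + 2) + (c * 1 + 1)) := mlast3 (by linarith) (by linarith)
  have h1 : max 0 (c * 0 + -1) = 0 := mneg (by linarith)
  have h7 : max 0 (c * 1 + 2) = (c * 1 + 2) := mpos (by linarith)
  funext i
  fin_cases i
  · show (c * -1 + -2) + (max 0 (max (c * -1 + 1) (max ((c * -1 + 1) + (c * 1 + 2)) (((c * -1 + 1) + (c * 1 + 2) + (c * 1 + 1)))))) - (max 0 (max (c * 0 + -1) (max ((c * 0 + -1) + (c * -1 + -2)) (max ((c * 0 + -1) + (c * -1 + -2) + (c * -1 + 1)) (max ((c * 0 + -1) + (c * -1 + -2) + (c * -1 + 1) + (c * 1 + 2)) (((c * 0 + -1) + (c * -1 + -2) + (c * -1 + 1) + (c * 1 + 2) + (c * 1 + 1)))))))) = (c + 1) * 0 + 1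
    simp only [hD, hE, hF, hG, h1, h7]
    ring
  · show max 0 (c * 0 + -1) - (c * 0 + -1) - (c * -1 + -2) - (max 0 (max (c * -1 + 1) (max ((c * -1 + 1) + (c * 1 + 2)) (((c * -1 + 1) + (c * 1 + 2) + (c * 1 + 1)))))) = (c + 1) * 0 + -1
    simp only [hD, hE, hF, hG, h1, h7]
    ring
  · show (c * 0 + 1) + max 0 (c * 0 + -1) + (max 0 (max (c * -1 + 1) (max ((c * 1 + 0) + (c * -1 + 1)) (max ((c * -1 + 1) + (c * 1 + 2)) (max ((c * 1 + 0) + (c * -1 + 1) + (c * 1 + 2)) (max ((c * -1 + 1) + (c * 1 + 2) + (c * 1 + 1)) (((c * 1 + 0) + (c * -1 + 1) + (c * 1 + 2) + (c * 1 + 1))))))))) - (max 0 (max (c * -1 + 1) (max ((c * -1 + 1) + (c * 1 + 2)) (((c * -1 + 1) + (c * 1 + 2) + (c * 1 + 1)))))) = (c + 1) * 1 + 0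
    simp only [hD, hE, hF, hG, h1, h7]
    ring
  · show (c * 1 + 0) + (max 0 (max (c * 0 + -1) (max ((c * 0 + -1) + (c * -1 + -2)) (max ((c * 0 + -1) + (c * -1 + -2) + (c * -1 + 1)) (max ((c * 0 + -1) + (c * -1 + -2) + (c * -1 + 1) + (c * 1 + 2)) (((c * 0 + -1) + (c * -1 + -2) + (c * -1 + 1) + (c * 1 + 2) + (c * 1 + 1)))))))) - max 0 (c * 0 + -1) - (max 0 (max (c * -1 + 1) (max ((c * 1 + 0) + (c * -1 + 1)) (max ((c * -1 + 1) + (c * 1 + 2)) (max ((c * 1 + 0) + (c * -1 + 1) + (c * 1 + 2)) (max ((c * -1 + 1) + (c * 1 + 2) + (c * 1 + 1)) (((c * 1 + 0) + (c * -1 + 1) + (c * 1 + 2) + (c * 1 + 1))))))))) = (c + 1) * -1 + -2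
    simp only [hD, hE, hF, hG, h1, h7]
    ring
  · show (c * 1 + 0) + (c * 0 + -2) + (c * -1 + 1) + (c * 1 + 2) + (max 0 (max (c * 1 + 2) (((c * 1 + 2) + (c * 1 + 1))))) - max 0 (c * 1 + 2) - (max 0 (max (c * -1 + 1) (max ((c * 1 + 0) + (c * -1 + 1)) (max ((c * -1 + 1) + (c * 1 + 2)) (max ((c * 1 + 0) + (c * -1 + 1) + (c * 1 + 2)) (max ((c * -1 + 1) + (c * 1 + 2) + (c * 1 + 1)) (((c * 1 + 0) + (c * -1 + 1) + (c * 1 + 2) + (c * 1 + 1))))))))) = (c + 1) * 0 + -2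
    simp only [hD, hE, hF, hG, h1, h7]
    ring
  · show (max 0 (max (c * -1 + 1) (max ((c * -1 + 1) + (c * 1 + 2)) (((c * -1 + 1) + (c * 1 + 2) + (c * 1 + 1)))))) - (c * 1 + 0) - (c * -1 + 1) - (max 0 (max (c * 1 + 2) (((c * 1 + 2) + (c * 1 + 1))))) = (c + 1) * -1 + 1
    simp only [hD, hE, hF, hG, h1, h7]
    ring
  · show (c * 1 + 1) - (max 0 (max (c * 1 + 2) (((c * 1 + 2) + (c * 1 + 1))))) = (c + 1) * -1 + -1
    simp only [hD, hE, hF, hG, h1, h7]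
    ring
  · show max 0 (c * 1 + 2) + (max 0 (max (c * -1 + 1) (max ((c * 1 + 0) + (c * -1 + 1)) (max ((c * -1 + 1) + (c * 1 + 2)) (max ((c * 1 + 0) + (c * -1 + 1) + (c * 1 + 2)) (max ((c * -1 + 1) + (c * 1 + 2) + (c * 1 + 1)) (((c * 1 + 0) + (c * -1 + 1) + (c * 1 + 2) + (c * 1 + 1))))))))) - (c * 1 + 2) - (c * 1 + 1) = (c + 1) * 1 + 2
    simp only [hD, hE, hF, hG, h1, h7]
    ring
  · show (c * -1 + -1) + max 0 (c * 1 + 2) = (c + 1) * 0 + 1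
    simp only [hD, hE, hF, hG, h1, h7]
    ring
  · show (c * 0 + 1) + (max 0 (max (c * 1 + 2) (((c * 1 + 2) + (c * 1 + 1))))) - max 0 (c * 1 + 2) = (c + 1) * 1 + 1
    simp only [hD, hE, hF, hG, h1, h7]
    ring


/-- For every natural number `b`, the `b`-fold iterate of `Q` applied to `g₄`
equals `b·g₁ + g₄`. -/
theorem stmt_15 (b : ℕ) : Q^[b] g4 = (b : ℝ) • g1 + g4 := by
  induction b with
  | zero => simp
  | succ n ih =>
    rw [Function.iterate_succ_apply', ih, key n (by positivity)]
    push_cast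
    ring_nf
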